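/- The language a*ba* ∪ a^+ over {a,b} is not strictly locally testable: for every width j ≥ 2 and every set F_j ⊆ {a,b,#}^j, Loc(F_j) ≠ a*ba* ∪ a^+. -/

import Mathlib

/-!
Common framework from the paper "Higher-order Operator Precedence Languages":
tagged words over an alphabet `α` (with a distinguished end-mark letter
`hash`), the tag set Δ = {[, ], ⊙}, tagged `k`-word factors, conflictual sets,
the strictly-locally-testable tagged language `Loc(Φ)`, handles, reductions
`⇝_Φ`, and the (tagged) maximal languages `RedBar Φ` / `Red Φ`.

Conventions: an end-word `⍟` is the alternating word `(#⊙)^m #` of (tagged)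
length `k-2`, so that it contributes `(k-1)/2` end-marks on each side,
matching all the examples of the paper.
-/

namespace HOP

/-- The three tags `[`, `]`, `⊙`. -/
inductive Tagg : Type where
  | lb : Tagg
  | rb : Tagg
  | dot : Tagg
deriving DecidableEq

/-- Symbols: either a terminal letter of `α` or a tag. -/
abbrev Sym (α : Type) := α ⊕ Tagg

/-- The projection `σ` erasing all tags. -/
def erase {α : Type} (w : List (Sym α)) : List α := w.filterMap Sum.getLeft?

/-- Tagged words: words in `Σ(ΔΣ)*`, i.e. alternating terminals and tags,
beginning and ending with a terminal. -/
inductive IsTagged {α : Type} : List (Sym α) → Prop where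
  | single (a : α) : IsTagged [Sum.inl a]
  | cons (a : α) (t : Tagg) {w : List (Sym α)} :
      IsTagged w → IsTagged (Sum.inl a :: Sum.inr t :: w)

/-- `φ_k(w)`: the set of tagged `k`-words occurring as factors of `w`. -/
def taggedFactors {α : Type} (k : ℕ) (w : List (Sym α)) : Set (List (Sym α)) :=
  {u | u.length = k ∧ IsTagged u ∧ u <:+: w}

/-- A set of tagged words is conflictual iff it contains two distinct words
with the same tag-erasure. -/
def Conflictual {α : Type} (S : Set (List (Sym α))) : Prop :=
  ∃ x ∈ S, ∃ y ∈ S, x ≠ y ∧ erase x = erase y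

def NonConflictual {α : Type} (S : Set (List (Sym α))) : Prop := ¬ Conflictual S

/-- `S` is a set of tagged `k`-words. -/
def TaggedKWords {α : Type} (k : ℕ) (S : Set (List (Sym α))) : Prop :=
  ∀ u ∈ S, IsTagged u ∧ u.length = k

/-- `hashWord hash n = # ⊙ # ⊙ … #` with `n+1` end-marks (tagged length `2n+1`). -/
def hashWord {α : Type} (hash : α) : ℕ → List (Sym α)
  | 0 => [Sum.inl hash]
  | n + 1 => Sum.inl hash :: Sum.inr Tagg.dot :: hashWord hash n

/-- The end-word `⍟ ∈ (#⊙)*#` used with width `k`: it has tagged length `k-2`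
(for odd `k ≥ 3`), i.e. `(k-1)/2` end-marks. -/
def endwFor {α : Type} (hash : α) (k : ℕ) : List (Sym α) := hashWord hash ((k - 3) / 2)

/-- `wrap hash k w = ⍟ [ w ] ⍟`. -/
def wrap {α : Type} (hash : α) (k : ℕ) (w : List (Sym α)) : List (Sym α) :=
  endwFor hash k ++ Sum.inr Tagg.lb :: (w ++ Sum.inr Tagg.rb :: endwFor hash k)

/-- `finalWord hash k = ⍟ ⊙ ⍟`, the target of a complete reduction. -/
def finalWord {α : Type} (hash : α) (k : ℕ) : List (Sym α) :=
  endwFor hash k ++ Sum.inr Tagg.dot :: endwFor hash k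

/-- The (full-word form of the) `k`-strictly-locally-testable tagged language:
all tagged `k`-word factors belong to `Φ`.  A tagged word `w` is in `Loc(Φ)`
in the sense of the paper iff `wrap hash k w ∈ LocFull k Φ`. -/
def LocFull {α : Type} (k : ℕ) (Φ : Set (List (Sym α))) : Set (List (Sym α)) :=
  {w | IsTagged w ∧ taggedFactors k w ⊆ Φ}

/-- `Loc(Φ)` as a set of tagged words `w` (tested on `⍟[w]⍟`). -/
def LocTagged {α : Type} (hash : α) (k : ℕ) (Φ : Set (List (Sym α))) :
    Set (List (Sym α)) :=
  {w | IsTagged w ∧ wrap hash k w ∈ LocFull k Φ}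

/-- The body `x` of a handle `[x]`: a tagged word over `Σ - {#}` whose tags are
all `⊙`. -/
def IsHandleBody {α : Type} (hash : α) (x : List (Sym α)) : Prop :=
  IsTagged x ∧ (∀ t : Tagg, Sum.inr t ∈ x → t = Tagg.dot) ∧ Sum.inl hash ∉ x

/-- One reduction step `w[x]z ⇝_Φ w s z`, allowed when `[x]` is a handle and
both source and target have all their tagged `k`-factors in `Φ`. -/
def RStep {α : Type} (hash : α) (k : ℕ) (Φ : Set (List (Sym α)))
    (u v : List (Sym α)) : Prop :=
  ∃ w x z, ∃ s : Tagg, IsHandleBody hash x ∧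
    u = w ++ Sum.inr Tagg.lb :: (x ++ Sum.inr Tagg.rb :: z) ∧
    v = w ++ Sum.inr s :: z ∧
    u ∈ LocFull k Φ ∧ v ∈ LocFull k Φ

/-- `⇝*_Φ`. -/
def Reduces {α : Type} (hash : α) (k : ℕ) (Φ : Set (List (Sym α))) :
    List (Sym α) → List (Sym α) → Prop :=
  Relation.ReflTransGen (RStep hash k Φ)

/-- The tagged maximal language `Red̄(Φ)`. -/
def RedBar {α : Type} (hash : α) (k : ℕ) (Φ : Set (List (Sym α))) :
    Set (List (Sym α)) :=
  {w | IsTagged w ∧ Reduces hash k Φ (wrap hash k w) (finalWord hash k)}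

/-- The maximal language `Red(Φ) = σ(Red̄(Φ))`. -/
def Red {α : Type} (hash : α) (k : ℕ) (Φ : Set (List (Sym α))) : Set (List α) :=
  erase '' RedBar hash k Φ

/-- Length-`j` factors of a plain word. -/
def plainFactors {α : Type} (j : ℕ) (w : List α) : Set (List α) :=
  {u | u.length = j ∧ u <:+: w}

/-- The `j`-strictly-locally-testable (plain) language `Loc(F)`, with
end-words `#^(j-1)`; as usual the language is `ε`-free and over `Σ - {#}`. -/
def LocPlain {α : Type} (hash : α) (j : ℕ) (F : Set (List α)) : Set (List α) :=
  {x | x ≠ [] ∧ hash ∉ x ∧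
    plainFactors j
      (List.replicate (j - 1) hash ++ x ++ List.replicate (j - 1) hash) ⊆ F}

end HOP

namespace HOP

/-- The alphabet `{a, b, #}`. -/
inductive ABH : Type where
  | a : ABH
  | b : ABH
  | h : ABH
deriving DecidableEq

open ABH

/-- `L = a* b a* ∪ a⁺` over `{a, b}`. -/
def L8 : Set (List ABH) :=
  {x | (∃ n m : ℕ, x = List.replicate n a ++ b :: List.replicate m a) ∨
       (∃ n : ℕ, 1 ≤ n ∧ x = List.replicate n a)}

/-!
Membership in `LocPlain hash j F` is decided by windows of width `j`, and such a window
cannot straddle a factor `z` of length `j - 1`. Hence the language is closed under splicing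
two members `p z s` and `p' z s'` into `p z s'`. Splicing `aʲ b aʲ` with itself along the
block `aʲ` yields `aʲ b aʲ b aʲ`, which has two `b`s and so lies outside `a* b a* ∪ a⁺`.
-/

theorem _root_.List.infix_of_append_eq_append_left {α : Type*} {s u t A B : List α}
    (h : s ++ u ++ t = A ++ B) (hl : s.length + u.length ≤ A.length) : u <:+: A := by
  have hpre : s ++ u <+: A :=
    List.prefix_of_prefix_length_le ⟨t, by rw [h]⟩ (List.prefix_append A B)
      (by simpa using hl)
  exact (List.suffix_append s u).isInfix.trans hpre.isInfix

theorem _root_.List.infix_of_append_eq_append_right {α : Type*} {s u t A B : List α}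
    (h : s ++ u ++ t = A ++ B) (hl : u.length + t.length ≤ B.length) : u <:+: B := by
  have hsuf : u ++ t <:+ B :=
    List.suffix_of_suffix_length_le ⟨s, by rw [← List.append_assoc, h]⟩
      (List.suffix_append A B) (by simpa using hl)
  exact (List.prefix_append u t).isInfix.trans hsuf.isInfix

theorem _root_.List.infix_append_or_infix_append_of_infix {α : Type*} {u A z B : List α}
    (hu : u <:+: A ++ z ++ B) (hj : u.length ≤ z.length + 1) :
    u <:+: A ++ z ∨ u <:+: z ++ B := by
  obtain ⟨s, t, hst⟩ := hu
  have htotal := congrArg List.length hst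
  simp only [List.length_append] at htotal
  by_cases hleft : s.length + u.length ≤ A.length + z.length
  · exact Or.inl (List.infix_of_append_eq_append_left hst (by simpa using hleft))
  · exact Or.inr (List.infix_of_append_eq_append_right (hst.trans (List.append_assoc _ _ _))
      (by simp only [List.length_append]; omega))

theorem LocPlain.splice {α : Type} {hash : α} {j : ℕ} {F : Set (List α)}
    {p z s p' s' : List α} (h₁ : p ++ z ++ s ∈ LocPlain hash j F)
    (h₂ : p' ++ z ++ s' ∈ LocPlain hash j F) (hz : z ≠ []) (hj : j ≤ z.length + 1) :
    p ++ z ++ s' ∈ LocPlain hash j F := by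
  obtain ⟨-, hhash₁, hF₁⟩ := h₁
  obtain ⟨-, hhash₂, hF₂⟩ := h₂
  set H := List.replicate (j - 1) hash
  refine ⟨by simp [hz], fun hmem => ?_, fun u ⟨hlen, hu⟩ => ?_⟩
  · simp only [List.mem_append] at hhash₁ hhash₂ hmem
    tauto
  · have hu' : u <:+: H ++ p ++ z ++ (s' ++ H) := by simpa using hu
    rcases List.infix_append_or_infix_append_of_infix hu' (by omega) with hl | hr
    · exact hF₁ ⟨hlen, hl.trans ⟨[], s ++ H, by simp⟩⟩
    · exact hF₂ ⟨hlen, hr.trans ⟨H ++ p', [], by simp⟩⟩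

theorem count_b_le_one_of_mem_L8 {x : List ABH} (hx : x ∈ L8) : x.count b ≤ 1 := by
  rcases hx with ⟨n, m, rfl⟩ | ⟨n, -, rfl⟩ <;> simp [List.count_replicate]

/-- `a* b a* ∪ a⁺` is not strictly locally testable: no width `j ≥ 2` and no
`j`-word set `F_j ⊆ {a,b,#}^j` define it. -/
theorem not_slt : ∀ j : ℕ, 2 ≤ j → ∀ F : Set (List ABH),
    (∀ u ∈ F, u.length = j) → LocPlain ABH.h j F ≠ L8 := by
  intro j hj F _ hLF
  have hmem : List.replicate j a ++ [b] ++ List.replicate j a ∈ LocPlain ABH.h j F :=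
    hLF ▸ Or.inl ⟨j, j, by simp⟩
  have hsplice : (List.replicate j a ++ [b]) ++ List.replicate j a ++ (b :: List.replicate j a)
      ∈ LocPlain ABH.h j F :=
    LocPlain.splice (s := []) (p' := []) (by simpa using hmem) (by simpa using hmem)
      (by simp; omega) (by simp)
  rw [hLF] at hsplice
  simpa [List.count_replicate] using count_b_le_one_of_mem_L8 hsplice

end HOP
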